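/- arXiv:0711.2000 — 3 statements merged into one kernel-verified Lean document; each statement's English description precedes it below -/
import Mathlib

section
/- Let (g_n)_{n≥1} ⊂ L^∞(ℝ,X) with g_n → g in the norm of L^∞(ℝ,X), and let Λ be a closed subset of the unit circle Γ. If the circular spectrum satisfies σ(g_n) ⊂ Λ for all n ∈ ℕ, then σ(g) ⊂ Λ. -/
/-!
The translation `S` is an invertible isometry, so its spectrum lies on the unit circle and
`‖R(λ,S) v‖ ≤ ‖v‖ / |1 - |λ||`. Suppose `ξ ∉ Λ` and take a disc `B` around `ξ` missing `Λ`.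
Every `R(·,S) g_n` extends analytically to some `F_n` on `B` (the local extensions glue, since
two of them agree off the circle, a dense set), and `F_n - F_m` extends `R(·,S) (g_n - g_m)`.
On a circle `|z - c| = ρ` inside `B`, a quadratic polynomial `ψ` with `|ψ z| = ρ |1 - |z|²|`
absorbs the blow-up of the resolvent bound, so the maximum principle applied to `ψ (F_n - F_m)`
gives `‖F_n c - F_m c‖ ≤ C ‖g_n - g_m‖` uniformly on a smaller disc. Thus `F_n` converges
uniformly there to an analytic function, which extends `R(·,S) g`; hence `ξ ∉ σ(g)`.
-/

open MeasureTheory Complex Metric BoundedContinuousFunction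

noncomputable section

/-- The space `L^∞(ℝ, X)` of (classes of) essentially bounded strongly measurable functions. -/
abbrev Linf (X : Type*) [NormedAddCommGroup X] : Type _ := Lp X ⊤ (volume : Measure ℝ)

variable (X : Type*) [NormedAddCommGroup X] [NormedSpace ℂ X] [CompleteSpace X]

/-- The translation operator `S` on `L^∞(ℝ,X)`, `(S g)(t) = g (t + 1)`. -/
def transOp : Linf X →L[ℂ] Linf X :=
  (Lp.compMeasurePreservingₗᵢ ℂ (fun t : ℝ => t + 1)
    (measurePreserving_add_right volume 1)).toContinuousLinearMap

/-- The circular spectrum of `g ∈ L^∞(ℝ,X)`: the set of points `ξ₀` of the unit circle `Γ`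
such that `λ ↦ R(λ,S) g` admits no analytic extension to any neighborhood of `ξ₀`. -/
def circSpec (g : Linf X) : Set ℂ :=
  {ξ | ‖ξ‖ = 1 ∧ ¬∃ (U : Set ℂ) (F : ℂ → Linf X), IsOpen U ∧ ξ ∈ U ∧
    AnalyticOnNhd ℂ F U ∧ ∀ lam ∈ U, ‖lam‖ ≠ 1 → F lam = resolvent (transOp X) lam g}

/-- A bounded continuous function, viewed as an element of `L^∞(ℝ,X)`. -/
def bcToLinf (f : ℝ →ᵇ X) : Linf X :=
  (memLp_top_of_bound f.continuous.aestronglyMeasurable ‖f‖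
    (Filter.Eventually.of_forall fun t => f.norm_coe_le_norm t)).toLp f

/-- Restriction of a continuous linear operator to an invariant submodule. -/
def restrictCLM {E : Type*} [NormedAddCommGroup E] [NormedSpace ℂ E]
    (f : E →L[ℂ] E) (p : Submodule ℂ E) (h : ∀ x ∈ p, f x ∈ p) : p →L[ℂ] p where
  toFun x := ⟨f x, h x x.2⟩
  map_add' x y := by ext; simp
  map_smul' c x := by ext; simp
  cont := Continuous.subtype_mk (f.continuous.comp continuous_subtype_val) _

/-- The translation operator `S` on `BC(ℝ,X)`, `(S g)(t) = g (t + 1)`. -/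
def transBC : (ℝ →ᵇ X) →L[ℂ] (ℝ →ᵇ X) :=
  LinearMap.mkContinuous
    { toFun := fun g => g.compContinuous ⟨fun t => t + 1, by continuity⟩
      map_add' := fun g h => by ext t; simp
      map_smul' := fun c g => by ext t; simp }
    1 (fun g => by
      simpa using g.norm_compContinuous_le ⟨fun t => t + 1, by continuity⟩)

/-- The translation `S(τ)` on `BC(ℝ,X)`, `(S(τ) g)(t) = g (t + τ)`. -/
def translateBC (τ : ℝ) (g : ℝ →ᵇ X) : ℝ →ᵇ X :=
  g.compContinuous ⟨fun t => t + τ, by continuity⟩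

/-- A 1-periodic strongly continuous evolutionary process on `X`. -/
structure EvolProcess (X : Type*) [NormedAddCommGroup X] [NormedSpace ℂ X] where
  U : ℝ → ℝ → X →L[ℂ] X
  idem : ∀ t : ℝ, U t t = ContinuousLinearMap.id ℂ X
  comp : ∀ r s t : ℝ, r ≤ s → s ≤ t → (U t s).comp (U s r) = U t r
  strongCont : ∀ x : X, ContinuousOn (fun p : ℝ × ℝ => U p.1 p.2 x) {p : ℝ × ℝ | p.2 ≤ p.1}
  periodic : ∀ t s : ℝ, U (t + 1) (s + 1) = U t s
  bound : ∃ N ω : ℝ, 0 < N ∧ 0 < ω ∧ ∀ t s : ℝ, s ≤ t → ‖U t s‖ ≤ N * Real.exp (ω * (t - s))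

open Filter Topology Set ComplexConjugate

section Spectrum

variable {A : Type*} [NormedRing A] [NormedAlgebra ℂ A] [CompleteSpace A]

theorem spectrum_subset_sphere_of_norm_le_one (u : Aˣ) (h1 : ‖(1 : A)‖ ≤ 1)
    (hu : ‖(u : A)‖ ≤ 1) (hu_inv : ‖((u⁻¹ : Aˣ) : A)‖ ≤ 1) :
    spectrum ℂ (u : A) ⊆ sphere (0 : ℂ) 1 := by
  intro k hk
  have hk0 : k ≠ 0 := spectrum.ne_zero_of_mem_of_unit hk
  have hk_le : ‖k‖ ≤ 1 :=
    (spectrum.norm_le_norm_mul_of_mem hk).trans (mul_le_one₀ hu (norm_nonneg _) h1)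
  have hk_inv_le : ‖k⁻¹‖ ≤ 1 :=
    (spectrum.norm_le_norm_mul_of_mem
      (spectrum.inv_mem_iff (r := Units.mk0 k hk0).mp hk)).trans
      (mul_le_one₀ hu_inv (norm_nonneg _) h1)
  rw [norm_inv, inv_le_one₀ (norm_pos_iff.mpr hk0)] at hk_inv_le
  exact mem_sphere_zero_iff_norm.mpr (le_antisymm hk_le hk_inv_le)

end Spectrum

section Isometry

variable {E : Type*} [NormedAddCommGroup E] [NormedSpace ℂ E]

theorem abs_one_sub_norm_mul_norm_resolvent_apply_le {T : E →L[ℂ] E}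
    (hT : ∀ v, ‖T v‖ = ‖v‖) {k : ℂ} (hk : k ∈ resolventSet ℂ T) (v : E) :
    |1 - ‖k‖| * ‖resolvent T k v‖ ≤ ‖v‖ := by
  set w := resolvent T k v
  have hw : k • w - T w = v := by
    simpa [w, resolvent, Algebra.algebraMap_eq_smul_one] using
      congr($(Ring.mul_inverse_cancel _ hk) v)
  calc |1 - ‖k‖| * ‖w‖ = |‖k • w‖ - ‖T w‖| := by
        rw [abs_sub_comm, norm_smul, hT, ← abs_of_nonneg (norm_nonneg w), ← abs_mul,
          sub_mul, one_mul, abs_of_nonneg (norm_nonneg w)]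
    _ ≤ ‖v‖ := hw ▸ abs_norm_sub_norm_le _ _

end Isometry

theorem Lp.compMeasurePreserving_add_right_add_right_of_add_eq_zero {E : Type*}
    [NormedAddCommGroup E] {p : ENNReal} {a b : ℝ} (hab : a + b = 0)
    (v : Lp E p (volume : Measure ℝ)) :
    Lp.compMeasurePreserving (· + a) (measurePreserving_add_right volume a)
      (Lp.compMeasurePreserving (· + b) (measurePreserving_add_right volume b) v) = v := by
  rw [← Lp.compMeasurePreserving_comp_apply]
  convert Lp.compMeasurePreserving_id_apply v
  ext t
  simp [add_assoc, hab]

section AnalyticExtension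

variable {E : Type*} [NormedAddCommGroup E] [NormedSpace ℂ E]

def AnalyticExtendsOn (F f : ℂ → E) (U : Set ℂ) : Prop :=
  AnalyticOnNhd ℂ F U ∧ ∀ z ∈ U, ‖z‖ ≠ 1 → F z = f z

theorem dense_setOf_norm_ne_one : Dense {z : ℂ | ‖z‖ ≠ 1} := by
  have h : {z : ℂ | ‖z‖ ≠ 1} = (sphere (0 : ℂ) 1)ᶜ := by ext; simp
  rw [h, ← interior_eq_empty_iff_dense_compl]
  exact interior_sphere 0 one_ne_zero

variable {F G f g : ℂ → E} {U V : Set ℂ}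

theorem AnalyticExtendsOn.mono (h : AnalyticExtendsOn F f U) (hVU : V ⊆ U) :
    AnalyticExtendsOn F f V :=
  ⟨h.1.mono hVU, fun z hz => h.2 z (hVU hz)⟩

theorem AnalyticExtendsOn.sub (hF : AnalyticExtendsOn F f U) (hG : AnalyticExtendsOn G g U) :
    AnalyticExtendsOn (F - G) (f - g) U :=
  ⟨fun z hz => (hF.1 z hz).sub (hG.1 z hz),
    fun z hz hz1 => by simp only [Pi.sub_apply, hF.2 z hz hz1, hG.2 z hz hz1]⟩

theorem AnalyticExtendsOn.eqOn (hU : IsOpen U) (hF : AnalyticExtendsOn F f U)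
    (hG : AnalyticExtendsOn G f U) : EqOn F G U :=
  EqOn.of_subset_closure (s := U ∩ {z | ‖z‖ ≠ 1})
    (fun z hz => (hF.2 z hz.1 hz.2).trans (hG.2 z hz.1 hz.2).symm)
    hF.1.continuousOn hG.1.continuousOn inter_subset_left
    (dense_setOf_norm_ne_one.open_subset_closure_inter hU)

theorem exists_analyticExtendsOn_of_forall_mem (hU : IsOpen U)
    (h : ∀ μ ∈ U, ∃ V F, IsOpen V ∧ μ ∈ V ∧ AnalyticExtendsOn F f V) :
    ∃ F, AnalyticExtendsOn F f U := by
  choose! V F hVo hμV hF using h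
  refine ⟨fun z => F z z, fun z₀ hz₀ => ?_, fun z hz hz1 => (hF z hz).2 z (hμV z hz) hz1⟩
  refine ((hF z₀ hz₀).1 z₀ (hμV z₀ hz₀)).congr ?_
  filter_upwards [((hVo z₀ hz₀).inter hU).mem_nhds ⟨hμV z₀ hz₀, hz₀⟩] with z hz
  exact ((hF z₀ hz₀).mono inter_subset_left).eqOn ((hVo z₀ hz₀).inter (hVo z hz.2))
    ((hF z hz.2).mono inter_subset_right) ⟨hz.1, hμV z hz.2⟩

theorem mul_norm_le_of_forall_mem_sphere {c : ℂ} {ρ M : ℝ} (hρ : 0 < ρ)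
    (hG : DiffContOnCl ℂ G (ball c ρ)) (hb : ∀ z ∈ sphere c ρ, |1 - ‖z‖| * ‖G z‖ ≤ M) :
    ρ * ‖c‖ * ‖G c‖ ≤ (1 + ‖c‖ + ρ) * M := by
  -- On the sphere `conj z = conj c + ρ² / (z - c)`, so `ψ z = (z - c) * (conj z * z - 1)`:
  -- the polynomial `ψ` cancels the blow-up of the bound at the unit circle.
  set ψ : ℂ → ℂ := fun z => conj c * z ^ 2 + ((ρ : ℂ) ^ 2 - 1 - conj c * c) * z + c
  have hψ_diff : Differentiable ℂ ψ := by fun_prop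
  have hψ_sphere : ∀ z ∈ sphere c ρ, ‖ψ z‖ = ρ * ((‖z‖ + 1) * |1 - ‖z‖|) := by
    intro z hz
    rw [mem_sphere_iff_norm] at hz
    have hconj : (z - c) * (conj z - conj c) = (ρ : ℂ) ^ 2 := by
      rw [← map_sub, mul_conj', hz]
    have hψz : ψ z = (z - c) * ((‖z‖ ^ 2 - 1 : ℝ) : ℂ) := by
      push_cast
      rw [← mul_conj']
      linear_combination (-z) * hconj
    rw [hψz, norm_mul, hz, norm_real, Real.norm_eq_abs]
    congr 1
    rw [show ‖z‖ ^ 2 - 1 = (‖z‖ + 1) * (‖z‖ - 1) by ring, abs_mul, abs_sub_comm,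
      abs_of_nonneg (by positivity : (0 : ℝ) ≤ ‖z‖ + 1)]
  have hfront : ∀ z ∈ frontier (ball c ρ), ‖ψ z • G z‖ ≤ ρ * ((1 + ‖c‖ + ρ) * M) := by
    rw [frontier_ball c hρ.ne']
    intro z hz
    have hzc : ‖z‖ ≤ ‖c‖ + ρ := by
      have := norm_sub_norm_le z c
      rw [← dist_eq_norm, mem_sphere.mp hz] at this
      linarith
    have hM : 0 ≤ M := (mul_nonneg (abs_nonneg _) (norm_nonneg _)).trans (hb z hz)
    calc ‖ψ z • G z‖ = ρ * (‖z‖ + 1) * (|1 - ‖z‖| * ‖G z‖) := by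
          rw [norm_smul, hψ_sphere z hz]; ring
      _ ≤ ρ * (‖z‖ + 1) * M := by gcongr; exact hb z hz
      _ ≤ ρ * ((1 + ‖c‖ + ρ) * M) := by
          rw [mul_assoc]; gcongr ρ * (?_ * M); linarith
  have hmax := Complex.norm_le_of_forall_mem_frontier_norm_le isBounded_ball
    (hψ_diff.diffContOnCl.smul hG) hfront (subset_closure (mem_ball_self hρ))
  have hψc : ψ c = (ρ : ℂ) ^ 2 * c := by ring
  rw [norm_smul, hψc, norm_mul, norm_pow, norm_real, Real.norm_of_nonneg hρ.le] at hmax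
  exact le_of_mul_le_mul_left (by linarith) hρ

theorem AnalyticExtendsOn.norm_le {ξ : ℂ} (hξ : ‖ξ‖ = 1) {ε M : ℝ} (hε : 0 < ε)
    (hε_half : ε ≤ 1 / 2) (hF : AnalyticExtendsOn F f (ball ξ (2 * ε)))
    (hf : ∀ z, |1 - ‖z‖| * ‖f z‖ ≤ M) {z : ℂ} (hz : z ∈ ball ξ ε) :
    ‖F z‖ ≤ 6 / ε * M := by
  have hM : 0 ≤ M := (mul_nonneg (abs_nonneg _) (norm_nonneg _)).trans (hf 0)
  have hz_dist : dist z ξ < ε := hz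
  have hz_norm : 1 / 2 ≤ ‖z‖ ∧ ‖z‖ ≤ 3 / 2 := by
    have h₁ := norm_sub_norm_le z ξ
    have h₂ := norm_sub_norm_le ξ z
    rw [← dist_eq_norm] at h₁
    rw [← dist_eq_norm, dist_comm] at h₂
    constructor <;> linarith
  have hsub : closedBall z ε ⊆ ball ξ (2 * ε) := fun w hw =>
    calc dist w ξ ≤ dist w z + dist z ξ := dist_triangle _ _ _
      _ < ε + ε := add_lt_add_of_le_of_lt hw hz_dist
      _ = 2 * ε := by ring
  have hF_cl : DiffContOnCl ℂ F (ball z ε) :=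
    (hF.1.mono (closure_ball_subset_closedBall.trans hsub)).differentiableOn.diffContOnCl
  have hb : ∀ w ∈ sphere z ε, |1 - ‖w‖| * ‖F w‖ ≤ M := by
    intro w hw
    rcases eq_or_ne ‖w‖ 1 with hw1 | hw1
    · simpa [hw1] using hM
    · rw [hF.2 w (hsub (sphere_subset_closedBall hw)) hw1]
      exact hf w
  have hmax := mul_norm_le_of_forall_mem_sphere hε hF_cl hb
  rw [div_mul_eq_mul_div, le_div_iff₀ hε]
  nlinarith [norm_nonneg (F z)]

theorem exists_analyticOnNhd_tendsto_of_uniformCauchySeqOn [CompleteSpace E] {F : ℕ → ℂ → E}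
    {U : Set ℂ} (hU : IsOpen U) (hF : ∀ n, AnalyticOnNhd ℂ (F n) U)
    (hF_cauchy : UniformCauchySeqOn F atTop U) :
    ∃ G, AnalyticOnNhd ℂ G U ∧ ∀ z ∈ U, Tendsto (fun n => F n z) atTop (𝓝 (G z)) := by
  set G : ℂ → E := fun z => limUnder atTop (fun n => F n z)
  have hFG : ∀ z ∈ U, Tendsto (fun n => F n z) atTop (𝓝 (G z)) := fun z hz =>
    (hF_cauchy.cauchySeq hz).tendsto_limUnder
  have hG : DifferentiableOn ℂ G U :=
    (hF_cauchy.tendstoUniformlyOn_of_tendsto hFG).tendstoLocallyUniformlyOn.differentiableOn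
      (Eventually.of_forall fun n => (hF n).differentiableOn) hU
  exact ⟨G, hG.analyticOnNhd hU, hFG⟩

end AnalyticExtension

theorem uniformCauchySeqOn_of_dist_le {α β γ : Type*} [PseudoMetricSpace β]
    [PseudoMetricSpace γ] {F : ℕ → α → β} {s : Set α} {a : ℕ → γ} (ha : CauchySeq a) {C : ℝ}
    (h : ∀ m n, ∀ z ∈ s, dist (F m z) (F n z) ≤ C * dist (a m) (a n)) :
    UniformCauchySeqOn F atTop s := by
  rw [Metric.uniformCauchySeqOn_iff]
  intro θ hθ
  obtain ⟨N, hN⟩ := Metric.cauchySeq_iff.mp ha (θ / (|C| + 1)) (by positivity)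
  refine ⟨N, fun m hm n hn z hz => ?_⟩
  calc dist (F m z) (F n z) ≤ C * dist (a m) (a n) := h m n z hz
    _ ≤ (|C| + 1) * dist (a m) (a n) :=
        mul_le_mul_of_nonneg_right (by linarith [le_abs_self C]) dist_nonneg
    _ < (|C| + 1) * (θ / (|C| + 1)) := by gcongr; exact hN m hm n hn
    _ = θ := by field_simp

section Translation

variable {Y : Type*} [NormedAddCommGroup Y] [NormedSpace ℂ Y]

def transOpUnit : (Linf Y →L[ℂ] Linf Y)ˣ where
  val := transOp Y
  inv := (Lp.compMeasurePreservingₗᵢ ℂ (· + -1)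
    (measurePreserving_add_right volume (-1))).toContinuousLinearMap
  val_inv := by
    ext1 v; exact Lp.compMeasurePreserving_add_right_add_right_of_add_eq_zero (by norm_num) v
  inv_val := by
    ext1 v; exact Lp.compMeasurePreserving_add_right_add_right_of_add_eq_zero (by norm_num) v

theorem norm_transOp_apply (v : Linf Y) : ‖transOp Y v‖ = ‖v‖ :=
  Lp.norm_compMeasurePreserving v _

variable [CompleteSpace Y]

theorem spectrum_transOp_subset_sphere : spectrum ℂ (transOp Y) ⊆ sphere (0 : ℂ) 1 := by
  have h1 : ‖(1 : Linf Y →L[ℂ] Linf Y)‖ ≤ 1 := ContinuousLinearMap.norm_id_le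
  have h := spectrum_subset_sphere_of_norm_le_one (A := Linf Y →L[ℂ] Linf Y) transOpUnit h1
    (LinearIsometry.norm_toContinuousLinearMap_le _)
    (LinearIsometry.norm_toContinuousLinearMap_le _)
  exact h

theorem mem_resolventSet_transOp {k : ℂ} (hk : ‖k‖ ≠ 1) : k ∈ resolventSet ℂ (transOp Y) :=
  spectrum.notMem_iff.mp fun hmem => hk (mem_sphere_zero_iff_norm.mp
    (spectrum_transOp_subset_sphere hmem))

theorem analyticOnNhd_resolvent_transOp_apply (v : Linf Y) :
    AnalyticOnNhd ℂ (fun k => resolvent (transOp Y) k v) {k : ℂ | ‖k‖ ≠ 1} := by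
  refine DifferentiableOn.analyticOnNhd (fun k hk => ?_)
    (isOpen_ne_fun continuous_norm continuous_const)
  have h := (spectrum.hasDerivAt_resolvent_const_left (A := Linf Y →L[ℂ] Linf Y)
    (mem_resolventSet_transOp hk)).differentiableAt
  exact (h.clm_apply (differentiableAt_const v)).differentiableWithinAt

theorem abs_one_sub_norm_mul_norm_resolvent_transOp_apply_le (k : ℂ) (v : Linf Y) :
    |1 - ‖k‖| * ‖resolvent (transOp Y) k v‖ ≤ ‖v‖ := by
  rcases eq_or_ne ‖k‖ 1 with hk | hk
  · simp [hk]
  · exact abs_one_sub_norm_mul_norm_resolvent_apply_le (T := transOp Y) norm_transOp_apply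
      (mem_resolventSet_transOp hk) v

theorem exists_analyticExtendsOn_resolvent_transOp {v : Linf Y} {U : Set ℂ} (hU : IsOpen U)
    (hUv : ∀ μ ∈ U, μ ∉ circSpec Y v) :
    ∃ F, AnalyticExtendsOn F (fun k => resolvent (transOp Y) k v) U := by
  refine exists_analyticExtendsOn_of_forall_mem hU fun μ hμ => ?_
  by_cases hμ1 : ‖μ‖ = 1
  · by_contra hne
    exact hUv μ hμ ⟨hμ1, hne⟩
  · exact ⟨{k | ‖k‖ ≠ 1}, _, isOpen_ne_fun continuous_norm continuous_const, hμ1,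
      analyticOnNhd_resolvent_transOp_apply v, fun _ _ _ => rfl⟩

end Translation

theorem stmt3 (g : ℕ → Linf X) (glim : Linf X)
    (hconv : Filter.Tendsto g Filter.atTop (nhds glim))
    (Λ : Set ℂ) (hΛclosed : IsClosed Λ)
    (hspec : ∀ n : ℕ, circSpec X (g n) ⊆ Λ) :
    circSpec X glim ⊆ Λ := by
  rintro ξ ⟨hξ, hξ_sing⟩
  by_contra hξΛ
  obtain ⟨ε, hε, hε_half, hεΛ⟩ : ∃ ε > 0, ε ≤ 1 / 2 ∧ ball ξ (2 * ε) ⊆ Λᶜ := by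
    obtain ⟨δ, hδ, hδΛ⟩ := Metric.isOpen_iff.mp hΛclosed.isOpen_compl ξ hξΛ
    refine ⟨min (δ / 2) (1 / 2), by positivity, min_le_right _ _,
      (ball_subset_ball ?_).trans hδΛ⟩
    linarith [min_le_left (δ / 2) (1 / 2)]
  have hsub : ball ξ ε ⊆ ball ξ (2 * ε) := ball_subset_ball (by linarith)
  choose F hF using fun n => exists_analyticExtendsOn_resolvent_transOp (v := g n) isOpen_ball
    fun μ hμ hμ_sing => hεΛ hμ (hspec n hμ_sing)
  have hF_cauchy : UniformCauchySeqOn F atTop (ball ξ ε) :=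
    uniformCauchySeqOn_of_dist_le hconv.cauchySeq fun m n z hz => by
      rw [dist_eq_norm, dist_eq_norm]
      refine ((hF m).sub (hF n)).norm_le hξ hε hε_half (fun k => ?_) hz
      simpa only [Pi.sub_apply, ← map_sub] using
        abs_one_sub_norm_mul_norm_resolvent_transOp_apply_le k (g m - g n)
  obtain ⟨G, hG, hFG⟩ := exists_analyticOnNhd_tendsto_of_uniformCauchySeqOn isOpen_ball
    (fun n => (hF n).1.mono hsub) hF_cauchy
  refine hξ_sing ⟨ball ξ ε, G, isOpen_ball, mem_ball_self hε, hG, fun k hk hk1 => ?_⟩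
  refine tendsto_nhds_unique (hFG k hk) ?_
  refine (((resolvent (transOp X) k).continuous.tendsto glim).comp hconv).congr fun n => ?_
  exact ((hF n).2 k (hsub hk) hk1).symm

end
end

section
/- Let A be a bounded linear operator on X and let 𝒜 denote the operator of multiplication by A on L^∞(ℝ,X), i.e. (𝒜g)(t) := A(g(t)). Then for every g ∈ L^∞(ℝ,X) the circular spectrum satisfies σ(𝒜g) ⊂ σ(g). -/
open MeasureTheory Complex Metric BoundedContinuousFunction

noncomputable section

variable (X : Type*) [NormedAddCommGroup X] [NormedSpace ℂ X] [CompleteSpace X]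

/-! Multiplication by `A` commutes with the translation `S`, hence with every resolvent
`R(λ, S)`; applying it to an analytic extension of `R(·, S) g` therefore gives one of
`R(·, S) (𝒜 g)`. -/

theorem Commute.ringInverse_right {M₀ : Type*} [MonoidWithZero M₀] {a b : M₀}
    (h : Commute a b) : Commute a (Ring.inverse b) := by
  by_cases hb : IsUnit b
  · obtain ⟨u, rfl⟩ := hb
    rw [Ring.inverse_unit]
    exact h.units_inv_right
  · rw [Ring.inverse_non_unit _ hb]
    exact Commute.zero_right a

theorem Commute.resolvent_right {R A : Type*} [CommSemiring R] [Ring A] [Algebra R A] {a b : A}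
    (h : Commute a b) (z : R) : Commute a (resolvent b z) :=
  ((Algebra.commute_algebraMap_right z a).sub_right h).ringInverse_right

theorem ContinuousLinearMap.compLp_compMeasurePreserving {α β 𝕜 𝕜' E F : Type*}
    [MeasurableSpace α] [MeasurableSpace β] {μ : Measure α} {ν : Measure β}
    {p : ENNReal} [NontriviallyNormedField 𝕜] [NontriviallyNormedField 𝕜'] {σ : 𝕜 →+* 𝕜'}
    [NormedAddCommGroup E] [NormedAddCommGroup F] [NormedSpace 𝕜 E] [NormedSpace 𝕜' F]
    [RingHomIsometric σ]
    (L : E →SL[σ] F) {f : α → β} (hf : MeasurePreserving f μ ν) (g : Lp E p ν) :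
    L.compLp (Lp.compMeasurePreserving f hf g) = Lp.compMeasurePreserving f hf (L.compLp g) := by
  apply Lp.ext
  filter_upwards [L.coeFn_compLp (Lp.compMeasurePreserving f hf g),
    Lp.coeFn_compMeasurePreserving g hf, Lp.coeFn_compMeasurePreserving (L.compLp g) hf,
    hf.quasiMeasurePreserving.ae (L.coeFn_compLp g)] with x h₁ h₂ h₃ h₄
  simp only [h₁, h₂, h₃, Function.comp_apply, h₄]

theorem compLpL_commute_transOp {E : Type*} [NormedAddCommGroup E] [NormedSpace ℂ E]
    (A : E →L[ℂ] E) : Commute (A.compLpL ⊤ volume : Linf E →L[ℂ] Linf E) (transOp E) :=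
  ContinuousLinearMap.ext fun g => A.compLp_compMeasurePreserving _ g

theorem circSpec_apply_subset {E : Type*} [NormedAddCommGroup E] [NormedSpace ℂ E]
    {T : Linf E →L[ℂ] Linf E} (hT : Commute T (transOp E)) (g : Linf E) :
    circSpec E (T g) ⊆ circSpec E g := by
  rintro ξ ⟨hξ, hext⟩
  refine ⟨hξ, fun ⟨U, F, hU, hξU, hF, hres⟩ => hext ⟨U, T ∘ F, hU, hξU,
    fun z hz => (T.analyticAt _).comp (hF z hz), fun lam hlam hnorm => ?_⟩⟩
  rw [Function.comp_apply, hres lam hlam hnorm]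
  exact congrArg (fun S : Linf E →L[ℂ] Linf E => S g) (hT.resolvent_right lam).eq

/-- for a bounded operator `A` on `X` and the multiplication operator
`(𝒜 g)(t) = A (g t)` on `L^∞(ℝ,X)`, one has `σ(𝒜 g) ⊆ σ(g)`. -/
theorem stmt4 (A : X →L[ℂ] X) (g : Linf X) :
    circSpec X (A.compLp g : Linf X) ⊆ circSpec X g :=
  circSpec_apply_subset (compLpL_commute_transOp A) g

end
end

section
/- Let (U(t,s))_{t≥s} be a 1-periodic strongly continuous evolutionary process on a complex Banach space X, with monodromy operators P(t) := U(t,t−1) and P := P(0). Let 𝓟 denote the operator of multiplication by P(t) on BC(ℝ,X), (𝓟g)(t) = P(t)g(t). Then σ(𝓟) ∖ {0} ⊂ σ(P) ∖ {0}, where σ(𝓟) is the spectrum of 𝓟 as a bounded operator on BC(ℝ,X) and σ(P) the spectrum of P on X. -/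
open MeasureTheory Complex Metric BoundedContinuousFunction

noncomputable section

variable (X : Type*) [NormedAddCommGroup X] [NormedSpace ℂ X] [CompleteSpace X]

/-! For `t - 1 ≤ s ≤ t` the monodromy factors as `P(t) = U(t,s) U(s,t-1)`, while by periodicity
the reversed product is `U(s,t-1) U(t,s) = P(s)`. Since `ab` and `ba` have the same nonzero
spectrum, with `(λ - ab)⁻¹ = λ⁻¹ (1 + a (λ - ba)⁻¹ b)`, a point `λ ≠ 0` outside `σ(P)` lies
outside every `σ(P(t))`. Taking `s = ⌊t⌋` shows that `t ↦ (λ - P(t))⁻¹` is uniformly bounded,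
taking `s = t₀ - 1/2` that it is strongly continuous near `t₀`; so multiplication by it is a
bounded operator on `BC(ℝ,X)`, and it inverts `λ - 𝓟`. -/
section General

variable {𝕜 α E F : Type*} [NontriviallyNormedField 𝕜] [TopologicalSpace α]
  [NormedAddCommGroup E] [NormedSpace 𝕜 E] [NormedAddCommGroup F] [NormedSpace 𝕜 F]

theorem ContinuousOn.clm_apply_of_norm_le {W : α → E →L[𝕜] F} {s : Set α} {C : ℝ}
    (hW : ∀ x, ContinuousOn (fun a => W a x) s) (hC : ∀ a ∈ s, ‖W a‖ ≤ C)
    {f : α → E} (hf : ContinuousOn f s) : ContinuousOn (fun a => W a (f a)) s := by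
  intro a₀ ha₀
  rw [ContinuousWithinAt, tendsto_iff_norm_sub_tendsto_zero]
  have hsplit : ∀ a ∈ s, ‖W a (f a) - W a₀ (f a₀)‖ ≤
      C * ‖f a - f a₀‖ + ‖W a (f a₀) - W a₀ (f a₀)‖ := fun a ha =>
    calc ‖W a (f a) - W a₀ (f a₀)‖ = ‖W a (f a - f a₀) + (W a (f a₀) - W a₀ (f a₀))‖ := by
          rw [map_sub, sub_add_sub_cancel]
      _ ≤ ‖W a‖ * ‖f a - f a₀‖ + ‖W a (f a₀) - W a₀ (f a₀)‖ :=
          (norm_add_le _ _).trans (add_le_add_left ((W a).le_opNorm _) _)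
      _ ≤ C * ‖f a - f a₀‖ + ‖W a (f a₀) - W a₀ (f a₀)‖ := by gcongr; exact hC a ha
  have hlim : Filter.Tendsto (fun a => C * ‖f a - f a₀‖ + ‖W a (f a₀) - W a₀ (f a₀)‖)
      (nhdsWithin a₀ s) (nhds 0) := by
    simpa using ((tendsto_iff_norm_sub_tendsto_zero.mp (hf a₀ ha₀)).const_mul C).add
      (tendsto_iff_norm_sub_tendsto_zero.mp (hW (f a₀) a₀ ha₀))
  exact squeeze_zero' (Filter.Eventually.of_forall fun _ => norm_nonneg _)
    (eventually_mem_nhdsWithin.mono hsplit) hlim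

namespace BoundedContinuousFunction

def applyFamilyCLM (W : α → E →L[𝕜] F) (hW : ∀ x, Continuous fun a => W a x) {C : ℝ}
    (hC : ∀ a, ‖W a‖ ≤ C) : (α →ᵇ E) →L[𝕜] (α →ᵇ F) :=
  have hC' (a : α) : ‖W a‖ ≤ max C 0 := (hC a).trans (le_max_left _ _)
  have hbound (g : α →ᵇ E) (a : α) : ‖W a (g a)‖ ≤ max C 0 * ‖g‖ :=
    (W a).le_of_opNorm_le_of_le (hC' a) (g.norm_coe_le_norm a)
  LinearMap.mkContinuous
    { toFun := fun g => ofNormedAddCommGroup (fun a => W a (g a))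
        (continuousOn_univ.mp <| ContinuousOn.clm_apply_of_norm_le
          (fun x => (hW x).continuousOn) (fun a _ => hC' a) g.continuous.continuousOn)
        _ (hbound g)
      map_add' := fun g h => by ext; simp
      map_smul' := fun c g => by ext; simp }
    (max C 0) fun g => norm_ofNormedAddCommGroup_le _ (by positivity) (hbound g)

@[simp]
theorem applyFamilyCLM_apply (W : α → E →L[𝕜] F) (hW : ∀ x, Continuous fun a => W a x) {C : ℝ}
    (hC : ∀ a, ‖W a‖ ≤ C) (g : α →ᵇ E) (a : α) : applyFamilyCLM W hW hC g a = W a (g a) :=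
  rfl

theorem isUnit_of_forall_isUnit {𝓐 : (α →ᵇ E) →L[𝕜] (α →ᵇ E)} {A : α → E →L[𝕜] E}
    (h𝓐 : ∀ g a, 𝓐 g a = A a (g a)) (hA : ∀ a, IsUnit (A a))
    (hcont : ∀ x, Continuous fun a => Ring.inverse (A a) x) {C : ℝ}
    (hC : ∀ a, ‖Ring.inverse (A a)‖ ≤ C) : IsUnit 𝓐 := by
  have h_right (a : α) (x : E) : A a (Ring.inverse (A a) x) = x :=
    DFunLike.congr_fun (Ring.mul_inverse_cancel _ (hA a)) x
  have h_left (a : α) (x : E) : Ring.inverse (A a) (A a x) = x :=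
    DFunLike.congr_fun (Ring.inverse_mul_cancel _ (hA a)) x
  refine ⟨⟨𝓐, applyFamilyCLM _ hcont hC, ?_, ?_⟩, rfl⟩ <;> ext g a <;> simp [h𝓐, h_left, h_right]

end BoundedContinuousFunction

end General

theorem resolvent_mul_comm {𝕜 A : Type*} [Field 𝕜] [Ring A] [Algebra 𝕜 A] {a b : A} {r : 𝕜}
    (hr : r ≠ 0) (h : r ∈ resolventSet 𝕜 (b * a)) :
    resolvent (a * b) r = r⁻¹ • (1 + a * resolvent (b * a) r * b) := by
  set L := algebraMap 𝕜 A r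
  set q := resolvent (b * a) r
  have hq₁ : (L - b * a) * q = 1 := Ring.mul_inverse_cancel _ (spectrum.mem_resolventSet_iff.mp h)
  have hq₂ : q * (L - b * a) = 1 := Ring.inverse_mul_cancel _ (spectrum.mem_resolventSet_iff.mp h)
  have hLa : L * a = a * L := Algebra.commutes r a
  have hLb : L * b = b * L := Algebra.commutes r b
  have hL : r⁻¹ • L = 1 := by
    simp only [L, Algebra.algebraMap_eq_smul_one, smul_smul, inv_mul_cancel₀ hr, one_smul]
  have h_right : (L - a * b) * (1 + a * q * b) = L :=
    calc (L - a * b) * (1 + a * q * b) = L - a * b + (L * a) * q * b - a * (b * a) * q * b := by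
          noncomm_ring
      _ = L - a * b + a * ((L - b * a) * q) * b := by rw [hLa]; noncomm_ring
      _ = L := by rw [hq₁]; noncomm_ring
  have h_left : (1 + a * q * b) * (L - a * b) = L :=
    calc (1 + a * q * b) * (L - a * b) = L - a * b + a * q * (b * L) - a * q * (b * a) * b := by
          noncomm_ring
      _ = L - a * b + a * (q * (L - b * a)) * b := by rw [← hLb]; noncomm_ring
      _ = L := by rw [hq₂]; noncomm_ring
  let u : Aˣ := ⟨L - a * b, r⁻¹ • (1 + a * q * b), by rw [mul_smul_comm, h_right, hL],
    by rw [smul_mul_assoc, h_left, hL]⟩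
  exact Ring.inverse_unit u

namespace EvolProcess

variable {V : Type*} [NormedAddCommGroup V] [NormedSpace ℂ V] (E : EvolProcess V)

def monodromy (t : ℝ) : V →L[ℂ] V := E.U t (t - 1)

theorem U_add_intCast (n : ℤ) (t s : ℝ) : E.U (t + n) (s + n) = E.U t s := by
  have hper : Function.Periodic (fun c : ℝ => E.U (t + c) (s + c)) 1 := fun c => by
    simpa only [add_assoc] using E.periodic (t + c) (s + c)
  simpa using hper.int_mul_eq n

theorem monodromy_intCast (n : ℤ) : E.monodromy n = E.monodromy 0 := by
  rw [monodromy, monodromy, ← E.U_add_intCast n 0 (0 - 1)]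
  congr 1 <;> ring

variable {E} in
theorem monodromy_eq_mul {s t : ℝ} (h₁ : t - 1 ≤ s) (h₂ : s ≤ t) :
    E.monodromy t = E.U t s * E.U s (t - 1) :=
  (E.comp _ _ _ h₁ h₂).symm

variable {E} in
theorem mul_eq_monodromy {s t : ℝ} (h₁ : t - 1 ≤ s) (h₂ : s ≤ t) :
    E.U s (t - 1) * E.U t s = E.monodromy s := by
  have hshift : E.U t s = E.U (t - 1) (s - 1) := by simpa using E.periodic (t - 1) (s - 1)
  rw [hshift]
  exact E.comp _ _ _ (by linarith) h₁

theorem spectrum_monodromy_diff_zero (t : ℝ) :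
    spectrum ℂ (E.monodromy t) \ {0} = spectrum ℂ (E.monodromy 0) \ {0} := by
  have h₁ : t - 1 ≤ ⌊t⌋ := by linarith [Int.lt_floor_add_one t]
  have h₂ : (⌊t⌋ : ℝ) ≤ t := Int.floor_le t
  rw [monodromy_eq_mul h₁ h₂, spectrum.nonzero_mul_comm, mul_eq_monodromy h₁ h₂,
    monodromy_intCast]

variable {E} in
theorem resolvent_monodromy_eq {r : ℂ} (hr : r ≠ 0) {s t : ℝ}
    (h : r ∈ resolventSet ℂ (E.monodromy s)) (h₁ : t - 1 ≤ s) (h₂ : s ≤ t) :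
    resolvent (E.monodromy t) r =
      r⁻¹ • (1 + E.U t s * resolvent (E.monodromy s) r * E.U s (t - 1)) := by
  rw [monodromy_eq_mul h₁ h₂, resolvent_mul_comm hr, mul_eq_monodromy h₁ h₂]
  rwa [mul_eq_monodromy h₁ h₂]

theorem exists_norm_U_le : ∃ M, ∀ t s, s ≤ t → t ≤ s + 1 → ‖E.U t s‖ ≤ M := by
  obtain ⟨N, ω, hN, hω, hb⟩ := E.bound
  refine ⟨N * Real.exp ω, fun t s h₁ h₂ => (hb t s h₁).trans ?_⟩
  gcongr
  nlinarith

theorem continuousOn_U_left (s : ℝ) (x : V) : ContinuousOn (fun t => E.U t s x) (Set.Ici s) :=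
  (E.strongCont x).comp (continuous_id.prodMk continuous_const).continuousOn fun _ ht => ht

theorem continuousOn_U_right (t : ℝ) (x : V) : ContinuousOn (fun s => E.U t s x) (Set.Iic t) :=
  (E.strongCont x).comp (continuous_const.prodMk continuous_id).continuousOn fun _ hs => hs

theorem continuous_resolvent_monodromy_apply {r : ℂ} (hr : r ≠ 0)
    (h : ∀ t, r ∈ resolventSet ℂ (E.monodromy t)) (x : V) :
    Continuous fun t => resolvent (E.monodromy t) r x := by
  obtain ⟨M, hM⟩ := E.exists_norm_U_le
  refine continuous_iff_continuousAt.mpr fun t₀ => ?_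
  -- on `[t₀ - 1/2, t₀ + 1/2]`, `resolvent_monodromy_eq` with `s = t₀ - 1/2` applies
  set s := t₀ - 1 / 2 with hs
  have hI : Set.Icc s (s + 1) ∈ nhds t₀ := Icc_mem_nhds (by linarith) (by linarith)
  have hinner : ContinuousOn (fun t => resolvent (E.monodromy s) r (E.U s (t - 1) x))
      (Set.Icc s (s + 1)) :=
    (resolvent (E.monodromy s) r).continuous.comp_continuousOn <|
      (E.continuousOn_U_right s x).comp (continuousOn_id.sub continuousOn_const)
        fun t ht => by simp only [Set.mem_Iic]; linarith [ht.2]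
  have houter : ContinuousOn
      (fun t => E.U t s (resolvent (E.monodromy s) r (E.U s (t - 1) x))) (Set.Icc s (s + 1)) :=
    ContinuousOn.clm_apply_of_norm_le
      (fun y => (E.continuousOn_U_left s y).mono Set.Icc_subset_Ici_self)
      (fun t ht => hM t s ht.1 ht.2) hinner
  have hformula : ContinuousOn
      (fun t => r⁻¹ • (x + E.U t s (resolvent (E.monodromy s) r (E.U s (t - 1) x))))
      (Set.Icc s (s + 1)) :=
    (continuousOn_const.add houter).const_smul r⁻¹
  refine (hformula.congr fun t ht => ?_).continuousAt hI
  rw [resolvent_monodromy_eq hr (h s) (by linarith [ht.2]) ht.1]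
  simp

theorem exists_norm_resolvent_monodromy_le {r : ℂ} (hr : r ≠ 0)
    (h : r ∈ resolventSet ℂ (E.monodromy 0)) : ∃ C, ∀ t, ‖resolvent (E.monodromy t) r‖ ≤ C := by
  obtain ⟨M, hM⟩ := E.exists_norm_U_le
  have hM0 : 0 ≤ M := (norm_nonneg _).trans (hM 0 0 le_rfl (by norm_num))
  refine ⟨‖r⁻¹‖ * (1 + M * ‖resolvent (E.monodromy 0) r‖ * M), fun t => ?_⟩
  have h₁ : t - 1 ≤ ⌊t⌋ := by linarith [Int.lt_floor_add_one t]
  have h₂ : (⌊t⌋ : ℝ) ≤ t := Int.floor_le t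
  rw [resolvent_monodromy_eq hr (E.monodromy_intCast ⌊t⌋ ▸ h) h₁ h₂, monodromy_intCast]
  set q := resolvent (E.monodromy 0) r
  calc ‖r⁻¹ • (1 + E.U t ⌊t⌋ * q * E.U ⌊t⌋ (t - 1))‖
      ≤ ‖r⁻¹‖ * (‖(1 : V →L[ℂ] V)‖ + ‖E.U t ⌊t⌋‖ * ‖q‖ * ‖E.U ⌊t⌋ (t - 1)‖) := by
        rw [norm_smul]
        gcongr
        exact (norm_add_le _ _).trans (add_le_add_right norm_mul₃_le _)
    _ ≤ ‖r⁻¹‖ * (1 + M * ‖q‖ * M) := by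
        gcongr
        · exact ContinuousLinearMap.norm_id_le
        · exact hM _ _ h₂ (by linarith [Int.lt_floor_add_one t])
        · exact hM _ _ (by linarith) (by linarith)

end EvolProcess

/-- for the multiplication operator `𝓟` by the monodromy operators
`P(t) = U(t,t-1)` on `BC(ℝ,X)`, one has `σ(𝓟) ∖ {0} ⊆ σ(P) ∖ {0}` with `P = P(0)`. -/
theorem stmt15 (E : EvolProcess X) (𝓟 : (ℝ →ᵇ X) →L[ℂ] (ℝ →ᵇ X))
    (h𝓟 : ∀ (g : ℝ →ᵇ X) (t : ℝ), 𝓟 g t = E.U t (t - 1) (g t)) :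
    spectrum ℂ 𝓟 \ {0} ⊆ spectrum ℂ (E.U 0 (0 - 1)) \ {0} := by
  rintro r ⟨hr𝓟, hr0⟩
  have hr : r ≠ 0 := hr0
  refine ⟨?_, hr0⟩
  by_contra hrP
  have hres (t : ℝ) : r ∈ resolventSet ℂ (E.monodromy t) := by
    by_contra ht
    have hmem : r ∈ spectrum ℂ (E.monodromy 0) \ {0} :=
      E.spectrum_monodromy_diff_zero t ▸ ⟨ht, hr0⟩
    exact hrP hmem.1
  obtain ⟨C, hC⟩ := E.exists_norm_resolvent_monodromy_le hr (hres 0)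
  refine spectrum.mem_iff.mp hr𝓟 <| BoundedContinuousFunction.isUnit_of_forall_isUnit
    (A := fun t => algebraMap ℂ _ r - E.monodromy t) (fun g t => ?_)
    (fun t => spectrum.mem_resolventSet_iff.mp (hres t))
    (E.continuous_resolvent_monodromy_apply hr hres) hC
  simp [h𝓟, EvolProcess.monodromy, Algebra.algebraMap_eq_smul_one]

end
end
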